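/- Let x = [[n,α],[β,n]] be an involution and z = [[t,ε],[φ,1+t]] an element of order 3 in the Paige loop over F₂. Then zx has order 2 if and only if α·φ + β·ε = n in F₂. -/

import Mathlib

/-- Zorn vector matrices over the field with two elements. -/
structure Zorn2 where
  a : ZMod 2
  alpha : Fin 3 → ZMod 2
  beta : Fin 3 → ZMod 2
  b : ZMod 2

namespace Zorn2

/-- Standard dot product on `F₂³`. -/
def zdot (u v : Fin 3 → ZMod 2) : ZMod 2 := u 0 * v 0 + u 1 * v 1 + u 2 * v 2

/-- Standard cross product on `F₂³`. -/
def zcross (u v : Fin 3 → ZMod 2) : Fin 3 → ZMod 2 :=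
  ![u 1 * v 2 - u 2 * v 1, u 2 * v 0 - u 0 * v 2, u 0 * v 1 - u 1 * v 0]

/-- Zorn's vector matrix multiplication. -/
instance : Mul Zorn2 :=
  ⟨fun x y =>
    { a := x.a * y.a + zdot x.alpha y.beta
      alpha := fun i => x.a * y.alpha i + x.alpha i * y.b - zcross x.beta y.beta i
      beta := fun i => x.beta i * y.a + x.b * y.beta i + zcross x.alpha y.alpha i
      b := zdot x.beta y.alpha + x.b * y.b }⟩

instance : One Zorn2 := ⟨{ a := 1, alpha := fun _ => 0, beta := fun _ => 0, b := 1 }⟩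

instance : Add Zorn2 :=
  ⟨fun x y => { a := x.a + y.a, alpha := x.alpha + y.alpha,
                beta := x.beta + y.beta, b := x.b + y.b }⟩

/-- Determinant (norm) of a Zorn vector matrix. -/
def det (x : Zorn2) : ZMod 2 := x.a * x.b - zdot x.alpha x.beta

/-- `x` has multiplicative order 2. -/
def ord2 (x : Zorn2) : Prop := x * x = 1 ∧ x ≠ 1

/-- `x` has multiplicative order 3. -/
def ord3 (x : Zorn2) : Prop := x * (x * x) = 1 ∧ x * x ≠ 1 ∧ x ≠ 1

end Zorn2

/-!
A determinant-one Zorn matrix `w` over `F₂` satisfies `w * w = (a + b) • w + 1`, so `w * w = 1`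
exactly when its diagonal entries agree: involutions have `a = b` and elements of order 3 have
`a + b = 1`. For such `x` and `z` the trace of `z * x` works out to `α·φ + β·ε + n`. Finally
`z * x ≠ 1`, since otherwise the right alternative law `z * x * x = z * (x * x)` gives `z = x`.
-/

theorem ZMod.add_eq_one_of_ne {a b : ZMod 2} (h : a ≠ b) : a + b = 1 := by
  revert a b; decide

namespace Zorn2

attribute [ext] Zorn2

@[simp] lemma mul_a (x y : Zorn2) : (x * y).a = x.a * y.a + zdot x.alpha y.beta := rfl
@[simp] lemma mul_alpha (x y : Zorn2) (i : Fin 3) :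
    (x * y).alpha i = x.a * y.alpha i + x.alpha i * y.b - zcross x.beta y.beta i := rfl
@[simp] lemma mul_beta (x y : Zorn2) (i : Fin 3) :
    (x * y).beta i = x.beta i * y.a + x.b * y.beta i + zcross x.alpha y.alpha i := rfl
@[simp] lemma mul_b (x y : Zorn2) : (x * y).b = zdot x.beta y.alpha + x.b * y.b := rfl

@[simp] lemma one_a : (1 : Zorn2).a = 1 := rfl
@[simp] lemma one_alpha (i : Fin 3) : (1 : Zorn2).alpha i = 0 := rfl
@[simp] lemma one_beta (i : Fin 3) : (1 : Zorn2).beta i = 0 := rfl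
@[simp] lemma one_b : (1 : Zorn2).b = 1 := rfl

lemma zdot_comm (u v : Fin 3 → ZMod 2) : zdot u v = zdot v u := by
  simp only [zdot]; ring

@[simp] lemma zcross_self (u : Fin 3 → ZMod 2) : zcross u u = 0 := by
  ext i; fin_cases i <;> simp [zcross, mul_comm]

protected lemma mul_one (x : Zorn2) : x * 1 = x := by
  ext i <;> (try fin_cases i) <;> simp [zdot, zcross]

protected lemma one_mul (x : Zorn2) : 1 * x = x := by
  ext i <;> (try fin_cases i) <;> simp [zdot, zcross]

lemma det_mul (x y : Zorn2) : det (x * y) = det x * det y := by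
  simp only [det, mul_a, mul_alpha, mul_beta, mul_b, zdot, zcross, Fin.isValue,
    Matrix.cons_val_zero, Matrix.cons_val_one, Matrix.cons_val]
  ring

lemma mul_mul_self (x y : Zorn2) : x * y * y = x * (y * y) := by
  ext i
  all_goals try fin_cases i
  all_goals
    simp only [mul_a, mul_alpha, mul_beta, mul_b, zdot, zcross, Fin.zero_eta, Fin.mk_one,
      Fin.reduceFinMk, Fin.isValue, Matrix.cons_val_zero, Matrix.cons_val_one, Matrix.cons_val]
    ring

lemma a_eq_b_of_mul_self_eq_one {w : Zorn2} (h : w * w = 1) : w.a = w.b := by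
  have ha : w.a * w.a + zdot w.alpha w.beta = 1 := by simpa using congrArg Zorn2.a h
  have hb : zdot w.alpha w.beta + w.b * w.b = 1 := by
    simpa [zdot_comm w.beta] using congrArg Zorn2.b h
  rw [← CharTwo.sq_inj]
  linear_combination ha - hb

lemma mul_self_eq_one_of_a_eq_b {w : Zorn2} (hd : det w = 1) (h : w.a = w.b) :
    w * w = 1 := by
  simp only [det] at hd
  ext i
  · simp only [mul_a, one_a]
    linear_combination w.a * h + hd + zdot w.alpha w.beta * CharTwo.two_eq_zero (R := ZMod 2)
  · simp [h, mul_comm, CharTwo.add_self_eq_zero]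
  · simp [h, mul_comm, CharTwo.add_self_eq_zero]
  · simp only [mul_b, one_b, zdot_comm w.beta]
    linear_combination -w.b * h + hd + zdot w.alpha w.beta * CharTwo.two_eq_zero (R := ZMod 2)

lemma mul_self_eq_one_iff {w : Zorn2} (hd : det w = 1) : w * w = 1 ↔ w.a = w.b :=
  ⟨a_eq_b_of_mul_self_eq_one, mul_self_eq_one_of_a_eq_b hd⟩

lemma mul_ne_one {x z : Zorn2} (hx : x * x = 1) (hz : z * z ≠ 1) : z * x ≠ 1 := by
  intro h
  have hzx : z = x := by
    calc z = z * (x * x) := by rw [hx, Zorn2.mul_one]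
      _ = z * x * x := (mul_mul_self z x).symm
      _ = x := by rw [h, Zorn2.one_mul]
  exact hz (hzx ▸ hx)

lemma mul_a_add_mul_b (z x : Zorn2) (hx : x.a = x.b) :
    (z * x).a + (z * x).b = zdot x.alpha z.beta + zdot x.beta z.alpha + (z.a + z.b) * x.a := by
  simp only [mul_a, mul_b, zdot_comm z.alpha, zdot_comm z.beta, ← hx]
  ring

end Zorn2

open Zorn2 in
theorem stmt12_general (x z : Zorn2)
    (hdx : Zorn2.det x = 1) (hdz : Zorn2.det z = 1)
    (hx2 : Zorn2.ord2 x) (hz3 : Zorn2.ord3 z) :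
    Zorn2.ord2 (z * x) ↔
      Zorn2.zdot x.alpha z.beta + Zorn2.zdot x.beta z.alpha = x.a := by
  have hxd : x.a = x.b := a_eq_b_of_mul_self_eq_one hx2.1
  have hzd : z.a + z.b = 1 := ZMod.add_eq_one_of_ne ((mul_self_eq_one_iff hdz).not.mp hz3.2.1)
  have hdet : det (z * x) = 1 := by rw [det_mul, hdz, hdx, one_mul]
  rw [ord2, mul_self_eq_one_iff hdet, ← CharTwo.add_eq_zero, mul_a_add_mul_b z x hxd, hzd,
    one_mul, CharTwo.add_eq_zero]
  exact and_iff_left (mul_ne_one hx2.1 hz3.2.1)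

open Zorn2 in
theorem stmt12 (x z : Zorn2)
    (hdx : Zorn2.det x = 1) (hdz : Zorn2.det z = 1)
    (hx2 : Zorn2.ord2 x) (hz3 : Zorn2.ord3 z)
    (hxd : x.a = x.b) (hzd : z.b = 1 + z.a) :
    Zorn2.ord2 (z * x) ↔
      Zorn2.zdot x.alpha z.beta + Zorn2.zdot x.beta z.alpha = x.a :=
  stmt12_general x z hdx hdz hx2 hz3
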